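/- arXiv:1307.5708 — 4 statements merged into one kernel-verified Lean document; each statement's English description precedes it below -/
import Mathlib

section
/- Translated polynomial kernels are strictly localized: let p_K ∈ ℝ^N be the signal whose graph Fourier transform is p̂_K(ℓ) = Σ_{k=0}^{K} a_k λ_ℓ^k for some real coefficients a_0,...,a_K. If the shortest-path distance d_G(i,n) between vertices i and n in the graph G (with an edge between distinct vertices m and n if and only if L_{mn} ≠ 0) satisfies d_G(i,n) > K, then (T_i p_K)(n) = 0. -/
open Finset

/-- Graph Fourier transform: f̂(ℓ) = Σₙ f(n) χ_ℓ(n). -/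
noncomputable def gft {N : ℕ} (χ : Fin N → Fin N → ℝ) (f : Fin N → ℝ) (l : Fin N) : ℝ :=
  ∑ n, f n * χ l n

/-- Generalized convolution: (f∗g)(n) = Σ_ℓ f̂(ℓ) ĝ(ℓ) χ_ℓ(n). -/
noncomputable def gconv {N : ℕ} (χ : Fin N → Fin N → ℝ) (f g : Fin N → ℝ) : Fin N → ℝ :=
  fun n => ∑ l, gft χ f l * gft χ g l * χ l n

/-- Generalized translation: (T_i f)(n) = √N Σ_ℓ f̂(ℓ) χ_ℓ(i) χ_ℓ(n). -/
noncomputable def gtrans {N : ℕ} (χ : Fin N → Fin N → ℝ) (i : Fin N) (f : Fin N → ℝ) : Fin N → ℝ :=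
  fun n => Real.sqrt N * ∑ l, gft χ f l * χ l i * χ l n

/-- Generalized modulation: (M_k f)(n) = √N f(n) χ_k(n). -/
noncomputable def gmod {N : ℕ} (χ : Fin N → Fin N → ℝ) (k : Fin N) (f : Fin N → ℝ) : Fin N → ℝ :=
  fun n => Real.sqrt N * f n * χ k n

/-- The simple graph associated to the matrix L: edge between distinct m, n iff L m n ≠ 0. -/
def graphOf {N : ℕ} (L : Matrix (Fin N) (Fin N) ℝ) : SimpleGraph (Fin N) :=
  SimpleGraph.fromRel fun m n => L m n ≠ 0

/-- The signal on the graph whose graph Fourier coefficients are ĝ(λ_ℓ). -/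
noncomputable def kernelSig {N : ℕ} (χ : Fin N → Fin N → ℝ) (lam : Fin N → ℝ)
    (ghat : ℝ → ℝ) : Fin N → ℝ :=
  fun m => ∑ l, ghat (lam l) * χ l m

/-- Windowed graph Fourier atom g_{i,k} = M_k T_i g. -/
noncomputable def wgfAtom {N : ℕ} (χ : Fin N → Fin N → ℝ) (g : Fin N → ℝ)
    (i k : Fin N) : Fin N → ℝ :=
  gmod χ k (gtrans χ i g)

/-!
The Fourier coefficients of the kernel are `p(λ_ℓ)` with `p = Σ_k a_k X^k`, so
`(T_i p_K)(n) = √N Σ_k a_k Σ_ℓ λ_ℓ^k χ_ℓ(i) χ_ℓ(n) = √N Σ_k a_k (L^k)_{in}` by expanding `L^k` in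
the orthonormal eigenbasis. A nonzero entry `(L^k)_{in}` is a nonzero product along some index
path `i → ⋯ → n` of length `k`, which becomes a walk in the graph of `L` once its diagonal steps
`m → m` are dropped;
hence every term with `k ≤ K < d_G(i,n)` vanishes.
-/

open Matrix

theorem sum_mul_eq_ite_of_orthonormal {ι : Type*} [Fintype ι] [DecidableEq ι] (v : ι → ι → ℝ)
    (horth : ∀ l l', ∑ n, v l n * v l' n = if l = l' then (1 : ℝ) else 0) (m n : ι) :
    ∑ l, v l m * v l n = if m = n then (1 : ℝ) else 0 := by
  have hrows : of v * (of v)ᵀ = 1 := by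
    ext l l'
    simp [mul_apply, one_apply, horth]
  have hcols : (of v)ᵀ * of v = 1 := mul_eq_one_comm.mp hrows
  simpa [mul_apply, one_apply] using congrFun (congrFun hcols m) n

namespace Matrix

variable {ι : Type*} [Fintype ι] [DecidableEq ι]

theorem pow_mulVec_eq_pow_smul {A : Matrix ι ι ℝ} {v : ι → ℝ} {μ : ℝ} (h : A *ᵥ v = μ • v)
    (k : ℕ) : (A ^ k) *ᵥ v = μ ^ k • v := by
  induction k with
  | zero => simp
  | succ k ih => rw [pow_succ, ← mulVec_mulVec, h, mulVec_smul, ih, smul_smul, pow_succ']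

theorem apply_eq_sum_of_mulVec_eq_smul (A : Matrix ι ι ℝ) (v : ι → ι → ℝ) (μ : ι → ℝ)
    (hcomplete : ∀ m n, ∑ l, v l m * v l n = if m = n then (1 : ℝ) else 0)
    (heig : ∀ l, A *ᵥ v l = μ l • v l) (i n : ι) :
    A i n = ∑ l, μ l * v l i * v l n :=
  calc A i n = ∑ m, A i m * ∑ l, v l m * v l n := by simp [hcomplete]
    _ = ∑ l, (A *ᵥ v l) i * v l n := by
      simp only [mulVec, dotProduct, mul_sum, sum_mul, mul_assoc]
      exact sum_comm
    _ = ∑ l, μ l * v l i * v l n := by simp [heig]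

end Matrix

theorem graphOf_exists_walk_of_pow_apply_ne_zero {N : ℕ} (L : Matrix (Fin N) (Fin N) ℝ)
    (k : ℕ) {i n : Fin N} (h : (L ^ k) i n ≠ 0) : ∃ w : (graphOf L).Walk i n, w.length ≤ k := by
  induction k generalizing n with
  | zero =>
    obtain rfl : i = n := by by_contra hne; simp [one_apply, hne] at h
    exact ⟨.nil, le_rfl⟩
  | succ k ih =>
    rw [pow_succ, mul_apply] at h
    obtain ⟨m, -, hm⟩ := exists_ne_zero_of_sum_ne_zero h
    obtain ⟨w, hw⟩ := ih (left_ne_zero_of_mul hm)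
    by_cases hmn : m = n
    · subst hmn
      exact ⟨w, hw.trans k.le_succ⟩
    · have hadj : (graphOf L).Adj m n := ⟨hmn, Or.inl (right_ne_zero_of_mul hm)⟩
      exact ⟨w.concat hadj, by simpa using hw⟩

theorem gft_kernelSig {N : ℕ} (χ : Fin N → Fin N → ℝ) (lam : Fin N → ℝ) (ghat : ℝ → ℝ)
    (horth : ∀ l l' : Fin N, ∑ n, χ l n * χ l' n = if l = l' then (1 : ℝ) else 0) (l : Fin N) :
    gft χ (kernelSig χ lam ghat) l = ghat (lam l) := by
  simp only [gft, kernelSig, sum_mul, mul_assoc]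
  rw [sum_comm]
  simp [← mul_sum, horth]

theorem gtrans_kernelSig {N : ℕ} (χ : Fin N → Fin N → ℝ) (lam : Fin N → ℝ) (ghat : ℝ → ℝ)
    (horth : ∀ l l' : Fin N, ∑ n, χ l n * χ l' n = if l = l' then (1 : ℝ) else 0) (i n : Fin N) :
    gtrans χ i (kernelSig χ lam ghat) n = √N * ∑ l, ghat (lam l) * χ l i * χ l n := by
  simp [gtrans, gft_kernelSig χ lam ghat horth]

theorem translated_polynomial_kernel_localized_general
    (N : ℕ) (L : Matrix (Fin N) (Fin N) ℝ)
    (χ : Fin N → Fin N → ℝ) (lam : Fin N → ℝ)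
    (horth : ∀ l l' : Fin N, ∑ n, χ l n * χ l' n = if l = l' then (1 : ℝ) else 0)
    (heig : ∀ l : Fin N, L.mulVec (χ l) = lam l • χ l)
    (K : ℕ) (a : ℕ → ℝ) (i n : Fin N)
    (hdist : ∀ w : (graphOf L).Walk i n, K < w.length) :
    gtrans χ i (fun m => ∑ l, (∑ k ∈ Finset.range (K + 1), a k * lam l ^ k) * χ l m) n
      = 0 := by
  have hpow_zero : ∀ k ∈ range (K + 1), (L ^ k) i n = 0 := fun k hk => by
    by_contra h
    obtain ⟨w, hw⟩ := graphOf_exists_walk_of_pow_apply_ne_zero L k h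
    have := hdist w
    grind
  have hpow_apply (k : ℕ) : (L ^ k) i n = ∑ l, lam l ^ k * χ l i * χ l n :=
    apply_eq_sum_of_mulVec_eq_smul _ χ _ (sum_mul_eq_ite_of_orthonormal χ horth)
      (fun l => pow_mulVec_eq_pow_smul (heig l) k) i n
  change gtrans χ i (kernelSig χ lam fun x => ∑ k ∈ range (K + 1), a k * x ^ k) n = 0
  rw [gtrans_kernelSig χ lam _ horth]
  calc √N * ∑ l, (∑ k ∈ range (K + 1), a k * lam l ^ k) * χ l i * χ l n
      = √N * ∑ k ∈ range (K + 1), a k * (L ^ k) i n := by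
        simp only [hpow_apply, sum_mul, mul_sum, mul_assoc]
        rw [sum_comm]
    _ = 0 := by rw [sum_eq_zero fun k hk => by rw [hpow_zero k hk, mul_zero], mul_zero]

/-- Translated polynomial kernels are strictly localized: if the
shortest-path distance between i and n exceeds K (i.e. every walk from i to n has
length > K), then (T_i p_K)(n) = 0, where p̂_K(ℓ) = Σ_{k=0}^{K} a_k λ_ℓ^k. -/
theorem translated_polynomial_kernel_localized
    (N : ℕ) (hN : 0 < N) (L : Matrix (Fin N) (Fin N) ℝ) (hL : L.IsSymm)
    (χ : Fin N → Fin N → ℝ) (lam : Fin N → ℝ)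
    (horth : ∀ l l' : Fin N, ∑ n, χ l n * χ l' n = if l = l' then (1 : ℝ) else 0)
    (heig : ∀ l : Fin N, L.mulVec (χ l) = lam l • χ l)
    (K : ℕ) (a : ℕ → ℝ) (i n : Fin N)
    (hdist : ∀ w : (graphOf L).Walk i n, K < w.length) :
    gtrans χ i (fun m => ∑ l, (∑ k ∈ Finset.range (K + 1), a k * lam l ^ k) * χ l m) n
      = 0 :=
  translated_polynomial_kernel_localized_general N L χ lam horth heig K a i n hdist
end

section
/- Localization of modulated kernels in the graph spectral domain: assume χ_0(n) = 1/√N for all n and that the eigenvalues λ_0, ..., λ_{N−1} are distinct. Suppose f ∈ ℝ^N and γ > 0 satisfy √N · Σ_{ℓ=1}^{N−1} μ_ℓ |f̂(ℓ)| ≤ |f̂(0)| / (1+γ), where μ_ℓ := max_{i} |χ_ℓ(i)|. Then for every k and every ℓ ≠ k, |(M_k f)^(k)| ≥ γ · |(M_k f)^(ℓ)|, where (M_k f)^ denotes the graph Fourier transform of M_k f. -/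
open Finset

/-
Expanding `f` in the eigenbasis, `(M_k f)^(ℓ) = √N Σ_m f̂(m) ⟨χ_m χ_k, χ_ℓ⟩`. Since `χ_0` is
constant, the term `m = 0` equals `f̂(0) δ_{kℓ}`; every other term is at most `√N μ_m |f̂(m)|`
because `Σ_n |χ_k(n) χ_ℓ(n)| ≤ 1` by AM-GM. So `(M_k f)^(k)` lies within
`E := √N Σ_{m ≠ 0} μ_m |f̂(m)|` of `f̂(0)` and `(M_k f)^(ℓ)` within `E` of `0`, and
`E ≤ |f̂(0)| / (1 + γ)` gives the ratio `γ`.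
-/

section UnitVectors

variable {ι : Type*} [Fintype ι]

theorem sum_abs_mul_abs_le_one {b c : ι → ℝ} (hb : ∑ n, b n * b n = 1)
    (hc : ∑ n, c n * c n = 1) : ∑ n, |b n| * |c n| ≤ 1 := by
  have hamgm : ∀ n, |b n| * |c n| ≤ (b n * b n + c n * c n) / 2 := fun n => by
    nlinarith [two_mul_le_add_sq |b n| |c n|, sq_abs (b n), sq_abs (c n)]
  calc ∑ n, |b n| * |c n| ≤ ∑ n, (b n * b n + c n * c n) / 2 := sum_le_sum fun n _ => hamgm n
    _ = 1 := by rw [← sum_div, sum_add_distrib, hb, hc]; norm_num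

theorem abs_sum_mul_mul_le {a b c : ι → ℝ} {M : ℝ} (ha : ∀ n, |a n| ≤ M)
    (hb : ∑ n, b n * b n = 1) (hc : ∑ n, c n * c n = 1) : |∑ n, a n * b n * c n| ≤ M := by
  obtain ⟨n₀⟩ : Nonempty ι := by
    by_contra h
    simp [not_nonempty_iff.mp h] at hb
  calc |∑ n, a n * b n * c n| ≤ ∑ n, M * (|b n| * |c n|) := by
        refine (abs_sum_le_sum_abs _ _).trans (sum_le_sum fun n _ => ?_)
        rw [abs_mul, abs_mul, mul_assoc]
        exact mul_le_mul_of_nonneg_right (ha n) (by positivity)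
    _ = M * ∑ n, |b n| * |c n| := (mul_sum ..).symm
    _ ≤ M := mul_le_of_le_one_right ((abs_nonneg _).trans (ha n₀)) (sum_abs_mul_abs_le_one hb hc)

end UnitVectors

theorem sum_col_mul_col_eq_ite {ι : Type*} [Fintype ι] [DecidableEq ι] {χ : ι → ι → ℝ}
    (horth : ∀ l l', ∑ n, χ l n * χ l' n = if l = l' then (1 : ℝ) else 0) (p q : ι) :
    ∑ m, χ m p * χ m q = if p = q then (1 : ℝ) else 0 := by
  have hrows : Matrix.of χ * (Matrix.of χ).transpose = 1 := by
    ext a b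
    simpa [Matrix.mul_apply, Matrix.one_apply] using horth a b
  have hcols : (Matrix.of χ).transpose * Matrix.of χ = 1 := mul_eq_one_comm.mp hrows
  simpa [Matrix.mul_apply, Matrix.one_apply] using congrFun (congrFun hcols p) q

section GraphFourier

variable {N : ℕ} {χ : Fin N → Fin N → ℝ}

theorem sum_gft_mul_eq (horth : ∀ l l', ∑ n, χ l n * χ l' n = if l = l' then (1 : ℝ) else 0)
    (f : Fin N → ℝ) (n : Fin N) : ∑ m, gft χ f m * χ m n = f n := by
  simp_rw [gft, sum_mul, mul_assoc]
  rw [sum_comm]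
  simp [← mul_sum, sum_col_mul_col_eq_ite horth]

theorem gft_gmod (horth : ∀ l l', ∑ n, χ l n * χ l' n = if l = l' then (1 : ℝ) else 0)
    (k : Fin N) (f : Fin N → ℝ) (l : Fin N) :
    gft χ (gmod χ k f) l = √N * ∑ m, gft χ f m * ∑ n, χ m n * χ k n * χ l n := by
  have hexpand : gft χ (gmod χ k f) l = ∑ n, √N * (∑ m, gft χ f m * χ m n) * χ k n * χ l n := by
    simp only [sum_gft_mul_eq horth]
    rfl
  simp_rw [hexpand, mul_sum, sum_mul]
  rw [sum_comm]
  refine sum_congr rfl fun m _ => sum_congr rfl fun n _ => ?_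
  ring

theorem abs_gft_gmod_sub_ite_le
    (horth : ∀ l l', ∑ n, χ l n * χ l' n = if l = l' then (1 : ℝ) else 0)
    {z : Fin N} (hχz : ∀ n, χ z n = 1 / √N) {μ : Fin N → ℝ} (hμ : ∀ m n, |χ m n| ≤ μ m)
    (k : Fin N) (f : Fin N → ℝ) (l : Fin N) :
    |gft χ (gmod χ k f) l - if k = l then gft χ f z else 0|
      ≤ √N * ∑ m ∈ univ.erase z, μ m * |gft χ f m| := by
  have hN : 0 < √N := by
    have : 0 < N := Fin.pos z
    positivity
  have hzero : √N * (gft χ f z * ∑ n, χ z n * χ k n * χ l n) = if k = l then gft χ f z else 0 := by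
    simp_rw [hχz, mul_assoc, ← mul_sum, horth k l]
    split_ifs <;> simp [field]
  rw [gft_gmod horth, ← add_sum_erase _ _ (mem_univ z), mul_add, hzero, add_sub_cancel_left,
    abs_mul, abs_of_pos hN]
  refine mul_le_mul_of_nonneg_left ((abs_sum_le_sum_abs _ _).trans (sum_le_sum fun m _ => ?_))
    hN.le
  rw [abs_mul, mul_comm]
  exact mul_le_mul_of_nonneg_right
    (abs_sum_mul_mul_le (hμ m) (by simpa using horth k k) (by simpa using horth l l))
    (abs_nonneg _)

end GraphFourier

theorem mul_abs_le_abs_of_le_div_one_add {x y a E γ : ℝ} (hγ : 0 < γ)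
    (hx : |x| ≤ E) (hy : |y - a| ≤ E) (hE : E ≤ |a| / (1 + γ)) : γ * |x| ≤ |y| := by
  rw [le_div_iff₀ (by linarith)] at hE
  have hya : |a| - E ≤ |y| := by linarith [abs_sub_abs_le_abs_sub a y, abs_sub_comm y a]
  nlinarith

theorem modulated_kernel_spectral_localization_general
    (N : ℕ) (hN : 0 < N) (χ : Fin N → Fin N → ℝ)
    (horth : ∀ l l' : Fin N, ∑ n, χ l n * χ l' n = if l = l' then (1 : ℝ) else 0)
    (hχ0 : ∀ n, χ ⟨0, hN⟩ n = 1 / Real.sqrt N)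
    (muL : Fin N → ℝ)
    (hmuL : ∀ l : Fin N, IsGreatest (Set.range fun j => |χ l j|) (muL l))
    (f : Fin N → ℝ) (γ : ℝ) (hγ : 0 < γ)
    (hcond : Real.sqrt N * ∑ l ∈ Finset.univ.erase (⟨0, hN⟩ : Fin N), muL l * |gft χ f l|
      ≤ |gft χ f ⟨0, hN⟩| / (1 + γ))
    (k l : Fin N) (hlk : l ≠ k) :
    γ * |gft χ (gmod χ k f) l| ≤ |gft χ (gmod χ k f) k| := by
  have hμ : ∀ m n, |χ m n| ≤ muL m := fun m n => (hmuL m).2 ⟨n, rfl⟩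
  have hoff := abs_gft_gmod_sub_ite_le horth hχ0 hμ k f l
  have hdiag := abs_gft_gmod_sub_ite_le horth hχ0 hμ k f k
  rw [if_neg hlk.symm, sub_zero] at hoff
  rw [if_pos rfl] at hdiag
  exact mul_abs_le_abs_of_le_div_one_add hγ hoff hdiag hcond

/-- Localization of modulated kernels in the graph spectral domain:
if χ₀ ≡ 1/√N, the eigenvalues are distinct, and
√N · Σ_{ℓ≠0} μ_ℓ |f̂(ℓ)| ≤ |f̂(0)|/(1+γ), then for every k and every ℓ ≠ k,
|(M_k f)^(k)| ≥ γ·|(M_k f)^(ℓ)|. -/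
theorem modulated_kernel_spectral_localization
    (N : ℕ) (hN : 0 < N) (χ : Fin N → Fin N → ℝ) (lam : Fin N → ℝ)
    (horth : ∀ l l' : Fin N, ∑ n, χ l n * χ l' n = if l = l' then (1 : ℝ) else 0)
    (hχ0 : ∀ n, χ ⟨0, hN⟩ n = 1 / Real.sqrt N)
    (hinj : Function.Injective lam)
    (muL : Fin N → ℝ)
    (hmuL : ∀ l : Fin N, IsGreatest (Set.range fun j => |χ l j|) (muL l))
    (f : Fin N → ℝ) (γ : ℝ) (hγ : 0 < γ)
    (hcond : Real.sqrt N * ∑ l ∈ Finset.univ.erase (⟨0, hN⟩ : Fin N), muL l * |gft χ f l|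
      ≤ |gft χ f ⟨0, hN⟩| / (1 + γ))
    (k l : Fin N) (hlk : l ≠ k) :
    γ * |gft χ (gmod χ k f) l| ≤ |gft χ (gmod χ k f) k| :=
  modulated_kernel_spectral_localization_general N hN χ horth hχ0 muL hmuL f γ hγ hcond k l hlk
end

section
/- Exact energy identity for the windowed graph Fourier transform: for every window g ∈ ℝ^N and every signal f ∈ ℝ^N, Σ_{i=1}^{N} Σ_{k=0}^{N−1} |⟨f, g_{i,k}⟩|^2 = N · Σ_{n=1}^{N} |f(n)|^2 · ‖T_n g‖_2^2. Consequently, if ĝ(0) ≠ 0 and χ_0(n) = 1/√N for all n, then the collection {g_{i,k}} is a frame: A‖f‖_2^2 ≤ Σ_{i,k} |⟨f, g_{i,k}⟩|^2 ≤ B‖f‖_2^2 for all f, where A := min_n N‖T_n g‖_2^2 ≥ N|ĝ(0)|^2 > 0 and B := max_n N‖T_n g‖_2^2 ≤ N^2 μ^2 ‖g‖_2^2. -/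
open Finset

/-!
The modulation by `χ_k` turns `⟨f, g_{i,k}⟩` into `√N` times the `k`-th graph Fourier coefficient
of the pointwise product `f · T_i g`, so by Parseval the sum over `k` is `N ‖f · T_i g‖²`.
Summing over `i` and using the symmetry `(T_i g)(n) = (T_n g)(i)` gives the energy identity, a
weighted sum of `f(n)²` with weights `N ‖T_n g‖²`; the frame bounds are the extreme weights.
Parseval once more gives `‖T_n g‖² = N Σ_ℓ ĝ(ℓ)² χ_ℓ(n)²`, which is at least `ĝ(0)²` when
`χ_0 ≡ 1/√N` and at most `N μ² ‖g‖²`.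
-/

section WeightedSum

variable {ι : Type*} [Fintype ι]

theorem mul_sum_sq_le_sum_sq_mul {w : ι → ℝ} {A : ℝ} (hA : ∀ n, A ≤ w n) (f : ι → ℝ) :
    A * ∑ n, f n ^ 2 ≤ ∑ n, f n ^ 2 * w n := by
  rw [mul_sum]
  exact sum_le_sum fun n _ => by nlinarith [hA n, sq_nonneg (f n)]

theorem sum_sq_mul_le_mul_sum_sq {w : ι → ℝ} {B : ℝ} (hB : ∀ n, w n ≤ B) (f : ι → ℝ) :
    ∑ n, f n ^ 2 * w n ≤ B * ∑ n, f n ^ 2 := by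
  rw [mul_sum]
  exact sum_le_sum fun n _ => by nlinarith [hB n, sq_nonneg (f n)]

end WeightedSum

section Orthonormal

variable {ι κ : Type*} [Fintype ι] [Fintype κ] [DecidableEq ι]

theorem sum_sq_sum_mul_of_orthonormal (ψ : ι → κ → ℝ)
    (hψ : ∀ a b, ∑ n, ψ a n * ψ b n = if a = b then (1 : ℝ) else 0) (h : ι → ℝ) :
    ∑ m, (∑ l, h l * ψ l m) ^ 2 = ∑ l, h l ^ 2 := by
  have expand : ∀ m, (∑ l, h l * ψ l m) ^ 2 = ∑ a, ∑ b, h a * h b * (ψ a m * ψ b m) := by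
    intro m
    rw [sq, sum_mul_sum]
    exact sum_congr rfl fun a _ => sum_congr rfl fun b _ => by ring
  simp_rw [expand]
  rw [sum_comm]
  refine sum_congr rfl fun a _ => ?_
  rw [sum_comm]
  simp_rw [← mul_sum, hψ, mul_ite, mul_one, mul_zero, sum_ite_eq, mem_univ, if_true, sq]

theorem orthonormal_columns_of_orthonormal_rows (ψ : ι → ι → ℝ)
    (hψ : ∀ a b, ∑ n, ψ a n * ψ b n = if a = b then (1 : ℝ) else 0) (n n' : ι) :
    ∑ l, ψ l n * ψ l n' = if n = n' then (1 : ℝ) else 0 := by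
  have hrows : Matrix.of ψ * (Matrix.of ψ).transpose = 1 := by
    ext a b
    simpa [Matrix.mul_apply, Matrix.one_apply] using hψ a b
  have hcols : (Matrix.of ψ).transpose * Matrix.of ψ = 1 := mul_eq_one_comm.mp hrows
  simpa [Matrix.mul_apply, Matrix.one_apply] using congrFun (congrFun hcols n) n'

end Orthonormal

section WindowedGraphFourier

variable {N : ℕ} {χ : Fin N → Fin N → ℝ}

theorem gtrans_apply_comm (g : Fin N → ℝ) (i n : Fin N) :
    gtrans χ i g n = gtrans χ n g i := by
  unfold gtrans
  congr 1
  exact sum_congr rfl fun l _ => by ring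

variable (horth : ∀ l l' : Fin N, ∑ n, χ l n * χ l' n = if l = l' then (1 : ℝ) else 0)
include horth

theorem sum_sq_gft (f : Fin N → ℝ) : ∑ l, gft χ f l ^ 2 = ∑ n, f n ^ 2 :=
  sum_sq_sum_mul_of_orthonormal (fun n l => χ l n)
    (orthonormal_columns_of_orthonormal_rows χ horth) f

theorem sum_sq_gtrans (g : Fin N → ℝ) (n : Fin N) :
    ∑ m, gtrans χ n g m ^ 2 = N * ∑ l, (gft χ g l * χ l n) ^ 2 := by
  simp only [gtrans, mul_pow (Real.sqrt N), Real.sq_sqrt (Nat.cast_nonneg N), ← mul_sum]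
  rw [sum_sq_sum_mul_of_orthonormal χ horth (fun l => gft χ g l * χ l n)]

theorem sum_freq_sq_inner_wgfAtom (f g : Fin N → ℝ) (i : Fin N) :
    ∑ k, (∑ n, f n * wgfAtom χ g i k n) ^ 2 = N * ∑ n, f n ^ 2 * gtrans χ i g n ^ 2 := by
  have hcoeff : ∀ k, ∑ n, f n * wgfAtom χ g i k n
      = ∑ n, Real.sqrt N * f n * gtrans χ i g n * χ k n := fun k =>
    sum_congr rfl fun n _ => by simp only [wgfAtom, gmod]; ring
  simp_rw [hcoeff]
  rw [sum_sq_sum_mul_of_orthonormal (fun n k => χ k n)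
    (orthonormal_columns_of_orthonormal_rows χ horth), mul_sum]
  simp_rw [mul_pow, Real.sq_sqrt (Nat.cast_nonneg N), mul_assoc]

theorem sum_sq_inner_wgfAtom (f g : Fin N → ℝ) :
    ∑ i, ∑ k, (∑ n, f n * wgfAtom χ g i k n) ^ 2
      = N * ∑ n, f n ^ 2 * ∑ m, gtrans χ n g m ^ 2 := by
  simp_rw [sum_freq_sq_inner_wgfAtom horth, ← mul_sum]
  rw [sum_comm]
  simp_rw [gtrans_apply_comm g _ (_ : Fin N), mul_sum]

theorem sq_gft_le_sum_sq_gtrans {l₀ : Fin N} (hconst : ∀ n, χ l₀ n = 1 / Real.sqrt N)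
    (g : Fin N → ℝ) (n : Fin N) : gft χ g l₀ ^ 2 ≤ ∑ m, gtrans χ n g m ^ 2 := by
  have hN : (N : ℝ) ≠ 0 := by exact_mod_cast (Fin.pos n).ne'
  have hterm : (gft χ g l₀ * χ l₀ n) ^ 2 = gft χ g l₀ ^ 2 / N := by
    rw [hconst, mul_pow, div_pow, Real.sq_sqrt (Nat.cast_nonneg N)]
    ring
  calc gft χ g l₀ ^ 2 = N * (gft χ g l₀ * χ l₀ n) ^ 2 := by
        rw [hterm]
        field_simp
    _ ≤ N * ∑ l, (gft χ g l * χ l n) ^ 2 := by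
        gcongr
        exact single_le_sum (f := fun l => (gft χ g l * χ l n) ^ 2)
          (fun l _ => sq_nonneg _) (mem_univ l₀)
    _ = ∑ m, gtrans χ n g m ^ 2 := (sum_sq_gtrans horth g n).symm

theorem sum_sq_gtrans_le {μ : ℝ} (hμ : ∀ l j, |χ l j| ≤ μ) (g : Fin N → ℝ) (n : Fin N) :
    ∑ m, gtrans χ n g m ^ 2 ≤ N * μ ^ 2 * ∑ m, g m ^ 2 := by
  have hcoeff : ∀ l, (gft χ g l * χ l n) ^ 2 ≤ μ ^ 2 * gft χ g l ^ 2 := fun l => by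
    rw [mul_pow, mul_comm, ← sq_abs (χ l n)]
    gcongr
    exact hμ l n
  rw [sum_sq_gtrans horth, mul_assoc, ← sum_sq_gft horth g, mul_sum univ _ (μ ^ 2)]
  gcongr with l
  exact hcoeff l

end WindowedGraphFourier

/-- Exact energy identity for the windowed graph Fourier transform,
and the frame property: Σ_{i,k} |⟨f, g_{i,k}⟩|² = N·Σₙ |f(n)|²·‖T_n g‖₂² for all f;
consequently, if ĝ(0) ≠ 0 and χ₀ ≡ 1/√N, then with A = minₙ N‖T_n g‖₂² and
B = maxₙ N‖T_n g‖₂², one has N|ĝ(0)|² ≤ A, 0 < A, B ≤ N²μ²‖g‖₂², and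
A‖f‖₂² ≤ Σ_{i,k} |⟨f, g_{i,k}⟩|² ≤ B‖f‖₂² for all f. -/
theorem windowed_graph_fourier_frame
    (N : ℕ) (hN : 0 < N) (χ : Fin N → Fin N → ℝ)
    (horth : ∀ l l' : Fin N, ∑ n, χ l n * χ l' n = if l = l' then (1 : ℝ) else 0)
    (g : Fin N → ℝ)
    (μ : ℝ) (hμ : IsGreatest {x : ℝ | ∃ l j : Fin N, x = |χ l j|} μ)
    (A : ℝ) (hA : IsLeast (Set.range fun n : Fin N =>
      (N : ℝ) * ∑ m, (gtrans χ n g m) ^ 2) A)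
    (B : ℝ) (hB : IsGreatest (Set.range fun n : Fin N =>
      (N : ℝ) * ∑ m, (gtrans χ n g m) ^ 2) B) :
    (∀ f : Fin N → ℝ,
      ∑ i, ∑ k, (∑ n, f n * wgfAtom χ g i k n) ^ 2
        = (N : ℝ) * ∑ n, (f n) ^ 2 * ∑ m, (gtrans χ n g m) ^ 2) ∧
    (gft χ g ⟨0, hN⟩ ≠ 0 → (∀ n, χ ⟨0, hN⟩ n = 1 / Real.sqrt N) →
      ((N : ℝ) * (gft χ g ⟨0, hN⟩) ^ 2 ≤ A ∧ 0 < A ∧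
       B ≤ (N : ℝ) ^ 2 * μ ^ 2 * ∑ n, (g n) ^ 2 ∧
       (∀ f : Fin N → ℝ,
         A * ∑ n, (f n) ^ 2 ≤ ∑ i, ∑ k, (∑ n, f n * wgfAtom χ g i k n) ^ 2 ∧
         ∑ i, ∑ k, (∑ n, f n * wgfAtom χ g i k n) ^ 2 ≤ B * ∑ n, (f n) ^ 2))) := by
  have hweights (f : Fin N → ℝ) : ∑ i, ∑ k, (∑ n, f n * wgfAtom χ g i k n) ^ 2
      = ∑ n, f n ^ 2 * ((N : ℝ) * ∑ m, (gtrans χ n g m) ^ 2) := by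
    rw [sum_sq_inner_wgfAtom horth, mul_sum]
    exact sum_congr rfl fun n _ => by ring
  refine ⟨fun f => sum_sq_inner_wgfAtom horth f g, fun hg0 hconst => ?_⟩
  have hAlow : (N : ℝ) * (gft χ g ⟨0, hN⟩) ^ 2 ≤ A := by
    obtain ⟨n, rfl⟩ := hA.1
    exact mul_le_mul_of_nonneg_left (sq_gft_le_sum_sq_gtrans horth hconst g n) (Nat.cast_nonneg N)
  have hBup : B ≤ (N : ℝ) ^ 2 * μ ^ 2 * ∑ n, (g n) ^ 2 := by
    obtain ⟨n, rfl⟩ := hB.1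
    calc (N : ℝ) * ∑ m, (gtrans χ n g m) ^ 2 ≤ N * (N * μ ^ 2 * ∑ m, g m ^ 2) := by
          gcongr
          exact sum_sq_gtrans_le horth (fun l j => hμ.2 ⟨l, j, rfl⟩) g n
      _ = (N : ℝ) ^ 2 * μ ^ 2 * ∑ n, (g n) ^ 2 := by ring
  refine ⟨hAlow, lt_of_lt_of_le (by positivity) hAlow, hBup, fun f => ?_⟩
  rw [hweights f]
  exact ⟨mul_sum_sq_le_sum_sq_mul (fun n => hA.2 ⟨n, rfl⟩) f,
    sum_sq_mul_le_mul_sum_sq (fun n => hB.2 ⟨n, rfl⟩) f⟩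
end

section
/- Reconstruction formula for the windowed graph Fourier transform: let g ∈ ℝ^N be a window with ĝ(0) ≠ 0 and assume χ_0(n) = 1/√N for all n (so that ‖T_n g‖_2 > 0 for every n). Then for every f ∈ ℝ^N and every n ∈ {1,...,N}, f(n) = (1 / (N ‖T_n g‖_2^2)) · Σ_{i=1}^{N} Σ_{k=0}^{N−1} Sf(i,k) · g_{i,k}(n), where Sf(i,k) := ⟨f, g_{i,k}⟩. -/
open Finset

/-! Since `g_{i,k}(m) = √N (T_i g)(m) χ_k(m)` and the columns of an orthogonal matrix are
orthonormal too, summing `Sf(i,k) g_{i,k}(n)` over `k` collapses the inner product to its `n`-th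
term, leaving `N f(n) (T_i g)(n)²`. The symmetry `(T_i g)(n) = (T_n g)(i)` turns the sum over `i`
into `N f(n) ‖T_n g‖²`, and `‖T_n g‖ ≠ 0` because the `0`-th Fourier coefficient of `T_n g` is
`√N ĝ(0) χ_0(n) ≠ 0`. -/

section WindowedGraphFourier

variable {N : ℕ} (χ : Fin N → Fin N → ℝ)

theorem sum_mul_col_eq_ite_of_sum_mul_row_eq_ite
    (horth : ∀ l l' : Fin N, ∑ n, χ l n * χ l' n = if l = l' then (1 : ℝ) else 0)
    (m m' : Fin N) : ∑ l, χ l m * χ l m' = if m = m' then (1 : ℝ) else 0 := by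
  have hrows : Matrix.of χ * (Matrix.of χ).transpose = 1 := by
    ext l l'
    simpa [Matrix.mul_apply, Matrix.one_apply] using horth l l'
  have hcols : (Matrix.of χ).transpose * Matrix.of χ = 1 := mul_eq_one_comm.mp hrows
  simpa [Matrix.mul_apply, Matrix.one_apply] using congr_fun₂ hcols m m'

theorem gtrans_comm (g : Fin N → ℝ) (i m : Fin N) : gtrans χ i g m = gtrans χ m g i := by
  simp only [gtrans]
  exact congrArg _ (sum_congr rfl fun l _ => mul_right_comm _ _ _)

theorem gft_gtrans
    (horth : ∀ l l' : Fin N, ∑ n, χ l n * χ l' n = if l = l' then (1 : ℝ) else 0)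
    (g : Fin N → ℝ) (i l : Fin N) :
    gft χ (gtrans χ i g) l = Real.sqrt N * gft χ g l * χ l i := by
  calc gft χ (gtrans χ i g) l
      = Real.sqrt N * ∑ l', gft χ g l' * χ l' i * ∑ m, χ l' m * χ l m := by
        rw [gft]
        simp only [gtrans, sum_mul, mul_sum]
        rw [sum_comm]
        exact sum_congr rfl fun l' _ => sum_congr rfl fun m _ => by ring
    _ = Real.sqrt N * gft χ g l * χ l i := by
        simp only [horth, mul_ite, mul_one, mul_zero, sum_ite_eq', mem_univ, if_true, mul_assoc]

theorem sum_gtrans_sq_ne_zero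
    (horth : ∀ l l' : Fin N, ∑ n, χ l n * χ l' n = if l = l' then (1 : ℝ) else 0)
    {g : Fin N → ℝ} {i l : Fin N} (hl : gft χ g l * χ l i ≠ 0) :
    ∑ m, gtrans χ i g m ^ 2 ≠ 0 := by
  have hN : (0 : ℝ) < N := by exact_mod_cast Fin.pos l
  have hcoeff : gft χ (gtrans χ i g) l ≠ 0 := by
    rw [gft_gtrans χ horth, mul_assoc]
    exact mul_ne_zero (Real.sqrt_pos.mpr hN).ne' hl
  simp_rw [sq, Ne, sum_mul_self_eq_zero_iff]
  intro hzero
  exact hcoeff (sum_eq_zero fun m hm => by rw [hzero m hm, zero_mul])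

theorem sum_wgfAtom_mul_wgfAtom
    (hcol : ∀ m m' : Fin N, ∑ l, χ l m * χ l m' = if m = m' then (1 : ℝ) else 0)
    (g : Fin N → ℝ) (i m n : Fin N) :
    ∑ k, wgfAtom χ g i k m * wgfAtom χ g i k n =
      if m = n then (N : ℝ) * gtrans χ i g n ^ 2 else 0 := by
  have hsq : Real.sqrt N * Real.sqrt N = (N : ℝ) := Real.mul_self_sqrt N.cast_nonneg
  calc ∑ k, wgfAtom χ g i k m * wgfAtom χ g i k n
      = (Real.sqrt N * Real.sqrt N) * gtrans χ i g m * gtrans χ i g n *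
          ∑ k, χ k m * χ k n := by
        rw [mul_sum]
        exact sum_congr rfl fun k _ => by simp only [wgfAtom, gmod]; ring
    _ = if m = n then (N : ℝ) * gtrans χ i g n ^ 2 else 0 := by
        rw [hsq, hcol]
        split_ifs with hmn
        · subst hmn; ring
        · ring

theorem sum_sum_wgf_mul_wgfAtom
    (hcol : ∀ m m' : Fin N, ∑ l, χ l m * χ l m' = if m = m' then (1 : ℝ) else 0)
    (g f : Fin N → ℝ) (n : Fin N) :
    ∑ i, ∑ k, (∑ m, f m * wgfAtom χ g i k m) * wgfAtom χ g i k n =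
      (N : ℝ) * f n * ∑ m, gtrans χ n g m ^ 2 := by
  have hswap : ∀ i, ∑ k, (∑ m, f m * wgfAtom χ g i k m) * wgfAtom χ g i k n =
      ∑ m, f m * ∑ k, wgfAtom χ g i k m * wgfAtom χ g i k n := by
    intro i
    simp_rw [sum_mul, mul_sum, mul_assoc]
    exact sum_comm
  simp_rw [hswap, sum_wgfAtom_mul_wgfAtom χ hcol, mul_ite, mul_zero, sum_ite_eq']
  simp only [mem_univ, if_true, mul_sum, gtrans_comm χ g _ n]
  exact sum_congr rfl fun i _ => by ring

end WindowedGraphFourier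

/-- Reconstruction formula for the windowed graph Fourier transform:
if ĝ(0) ≠ 0 and χ₀ ≡ 1/√N, then for every f and every n,
f(n) = (1/(N‖T_n g‖₂²)) · Σ_{i,k} Sf(i,k)·g_{i,k}(n), where Sf(i,k) = ⟨f, g_{i,k}⟩. -/
theorem windowed_graph_fourier_reconstruction
    (N : ℕ) (hN : 0 < N) (χ : Fin N → Fin N → ℝ)
    (horth : ∀ l l' : Fin N, ∑ n, χ l n * χ l' n = if l = l' then (1 : ℝ) else 0)
    (g : Fin N → ℝ)
    (hg0 : gft χ g ⟨0, hN⟩ ≠ 0)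
    (hχ0 : ∀ n, χ ⟨0, hN⟩ n = 1 / Real.sqrt N)
    (f : Fin N → ℝ) (n : Fin N) :
    f n = (1 / ((N : ℝ) * ∑ m, (gtrans χ n g m) ^ 2)) *
      ∑ i, ∑ k, (∑ m, f m * wgfAtom χ g i k m) * wgfAtom χ g i k n := by
  have hN' : (N : ℝ) ≠ 0 := by exact_mod_cast hN.ne'
  have hcoeff : gft χ g ⟨0, hN⟩ * χ ⟨0, hN⟩ n ≠ 0 := by
    rw [hχ0]
    exact mul_ne_zero hg0 (one_div_ne_zero (Real.sqrt_ne_zero'.mpr (by positivity)))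
  have hnorm := sum_gtrans_sq_ne_zero χ horth hcoeff
  rw [sum_sum_wgf_mul_wgfAtom χ (sum_mul_col_eq_ite_of_sum_mul_row_eq_ite χ horth)]
  field_simp
end
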